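/- Every point of the inner bound region R_IN is contained in the outer bound region R_OUT; specifically, for all (λ1,λ2) with λ1,λ2 ≥ 0, if (λ1,λ2) ∈ (R¹_IN ∪ R²_IN) ∩ Rᴿ_IN then (λ1,λ2) ∈ (R¹_OUT ∪ R²_OUT) ∩ Rᴿ_OUT, where R¹_IN implies R¹_OUT and R²_IN implies R²_OUT. -/
import Mathlib


set_option maxHeartbeats 2000000 in
theorem inner_subset_outer
    (q0 q1 q2 p03 p13 p23 p10 p20 l1 l2 : ℝ)
    (hq0 : 0 < q0) (hq0' : q0 < 1) (hq1 : 0 < q1) (hq1' : q1 < 1)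
    (hq2 : 0 < q2) (hq2' : q2 < 1) (hp03 : 0 < p03) (hp03' : p03 ≤ 1)
    (h13 : 0 < p13) (h13' : p13 < 1) (h23 : 0 < p23) (h23' : p23 < 1)
    (h10 : 0 ≤ p10) (h10' : p10 ≤ 1) (h20 : 0 ≤ p20) (h20' : p20 ≤ 1)
    (hD1 : 0 < p13 + p10 * (1 - p13)) (hD2 : 0 < p23 + p20 * (1 - p23))
    (hl1 : 0 ≤ l1) (hl2 : 0 ≤ l2)
    (hin :
      (((((1 - q1) * (1 - q2) * p03 + q1 * p10 * (1 - p13)) /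
          (q1 * (1 - q1) * (1 - q2) * p03 * (p13 + p10 * (1 - p13)))) * l1 +
        (((1 - q2) * p03 + p20 * (1 - p23)) /
          ((1 - q1) * (1 - q2) * p03 * (p23 + p20 * (1 - p23)))) * l2 < 1 ∧
        (p10 * (1 - p13) / (p13 + p10 * (1 - p13))) * l1 +
          (((1 - q2) * p03 + q2 * p20 * (1 - p23)) / (q2 * (p23 + p20 * (1 - p23)))) * l2 <
            (1 - q1) * (1 - q2) * p03) ∨
       ((((1 - q1) * p03 + p10 * (1 - p13)) /
          ((1 - q1) * (1 - q2) * p03 * (p13 + p10 * (1 - p13)))) * l1 +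
        (((1 - q1) * (1 - q2) * p03 + q2 * p20 * (1 - p23)) /
          (q2 * (1 - q1) * (1 - q2) * p03 * (p23 + p20 * (1 - p23)))) * l2 < 1 ∧
        ((q1 * p10 * (1 - p13) + (1 - q1) * p03) / (q1 * (p13 + p10 * (1 - p13)))) * l1 +
          (p20 * (1 - p23) / (p23 + p20 * (1 - p23))) * l2 <
            (1 - q1) * (1 - q2) * p03)) ∧
      ((p10 * (1 - p13) / (p13 + p10 * (1 - p13))) * l1 +
        (p20 * (1 - p23) / (p23 + p20 * (1 - p23))) * l2 <
          q0 * (1 - q1) * (1 - q2) * p03)) :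
    ((l1 / (q1 * (p13 + p10 * (1 - p13))) +
        l2 / ((1 - q1) * (p23 + p20 * (1 - p23))) < 1 ∧
      l2 < q2 * (1 - q1) * (p23 + p20 * (1 - p23))) ∨
     (l2 / (q2 * (p23 + p20 * (1 - p23))) +
        l1 / ((1 - q2) * (p13 + p10 * (1 - p13))) < 1 ∧
      l1 < q1 * (1 - q2) * (p13 + p10 * (1 - p13)))) ∧
    ((p10 * (1 - p13) / (p13 + p10 * (1 - p13))) * l1 +
      (p20 * (1 - p23) / (p23 + p20 * (1 - p23))) * l2 < p03) := by
  obtain ⟨hbr, hR⟩ := hin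
  have hq1n : (0:ℝ) < 1 - q1 := by linarith
  have hq2n : (0:ℝ) < 1 - q2 := by linarith
  have h13n : (0:ℝ) ≤ 1 - p13 := by linarith
  have h23n : (0:ℝ) ≤ 1 - p23 := by linarith
  have ha : (0:ℝ) ≤ p10 * (1 - p13) / (p13 + p10 * (1 - p13)) :=
    div_nonneg (mul_nonneg h10 h13n) hD1.le
  have hb : (0:ℝ) ≤ p20 * (1 - p23) / (p23 + p20 * (1 - p23)) :=
    div_nonneg (mul_nonneg h20 h23n) hD2.le
  constructor
  · rcases hbr with ⟨h1, h2⟩ | ⟨h1, h2⟩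
    · left
      constructor
      · have hc1 : 1 / (q1 * (p13 + p10 * (1 - p13))) ≤
            ((1 - q1) * (1 - q2) * p03 + q1 * p10 * (1 - p13)) /
              (q1 * (1 - q1) * (1 - q2) * p03 * (p13 + p10 * (1 - p13))) := by
          rw [div_le_div_iff₀ (by positivity) (by positivity)]
          nlinarith [mul_nonneg (mul_nonneg (mul_nonneg (mul_pos hq1 hq1).le h10) h13n) hD1.le]
        have hc2 : 1 / ((1 - q1) * (p23 + p20 * (1 - p23))) ≤
            ((1 - q2) * p03 + p20 * (1 - p23)) /
              ((1 - q1) * (1 - q2) * p03 * (p23 + p20 * (1 - p23))) := by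
          rw [div_le_div_iff₀ (by positivity) (by positivity)]
          nlinarith [mul_nonneg (mul_nonneg (mul_nonneg hq1n.le h20) h23n) hD2.le]
        have c1 := mul_le_mul_of_nonneg_right hc1 hl1
        have c2 := mul_le_mul_of_nonneg_right hc2 hl2
        have e1 : l1 / (q1 * (p13 + p10 * (1 - p13))) =
            1 / (q1 * (p13 + p10 * (1 - p13))) * l1 := by ring
        have e2 : l2 / ((1 - q1) * (p23 + p20 * (1 - p23))) =
            1 / ((1 - q1) * (p23 + p20 * (1 - p23))) * l2 := by ring
        rw [e1, e2]; linarith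
      · have hal1 := mul_nonneg ha hl1
        have h2' : (((1 - q2) * p03 + q2 * p20 * (1 - p23)) /
            (q2 * (p23 + p20 * (1 - p23)))) * l2 < (1 - q1) * (1 - q2) * p03 := by linarith
        rw [div_mul_eq_mul_div, div_lt_iff₀ (by positivity)] at h2'
        nlinarith [mul_nonneg (mul_nonneg (mul_nonneg hl2 hq2.le) h20) h23n,
          mul_pos hq2n hp03]
    · right
      constructor
      · have hc1 : 1 / ((1 - q2) * (p13 + p10 * (1 - p13))) ≤
            ((1 - q1) * p03 + p10 * (1 - p13)) /
              ((1 - q1) * (1 - q2) * p03 * (p13 + p10 * (1 - p13))) := by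
          rw [div_le_div_iff₀ (by positivity) (by positivity)]
          nlinarith [mul_nonneg (mul_nonneg (mul_nonneg hq2n.le h10) h13n) hD1.le]
        have hc2 : 1 / (q2 * (p23 + p20 * (1 - p23))) ≤
            ((1 - q1) * (1 - q2) * p03 + q2 * p20 * (1 - p23)) /
              (q2 * (1 - q1) * (1 - q2) * p03 * (p23 + p20 * (1 - p23))) := by
          rw [div_le_div_iff₀ (by positivity) (by positivity)]
          nlinarith [mul_nonneg (mul_nonneg (mul_nonneg (mul_pos hq2 hq2).le h20) h23n) hD2.le]
        have c1 := mul_le_mul_of_nonneg_right hc1 hl1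
        have c2 := mul_le_mul_of_nonneg_right hc2 hl2
        have e1 : l1 / ((1 - q2) * (p13 + p10 * (1 - p13))) =
            1 / ((1 - q2) * (p13 + p10 * (1 - p13))) * l1 := by ring
        have e2 : l2 / (q2 * (p23 + p20 * (1 - p23))) =
            1 / (q2 * (p23 + p20 * (1 - p23))) * l2 := by ring
        rw [e1, e2]; linarith
      · have hbl2 := mul_nonneg hb hl2
        have h2' : ((q1 * p10 * (1 - p13) + (1 - q1) * p03) /
            (q1 * (p13 + p10 * (1 - p13)))) * l1 < (1 - q1) * (1 - q2) * p03 := by linarith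
        rw [div_mul_eq_mul_div, div_lt_iff₀ (by positivity)] at h2'
        nlinarith [mul_nonneg (mul_nonneg (mul_nonneg hl1 hq1.le) h10) h13n,
          mul_pos hq1n hp03]
  · have hc : q0 * (1 - q1) * (1 - q2) < 1 := by
      have h1 : q0 * (1 - q1) < 1 := by nlinarith
      nlinarith [mul_pos hq0 hq1n]
    have := mul_lt_mul_of_pos_right hc hp03
    linarith
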